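/- arXiv:1503.06321 — 3 statements merged into one kernel-verified Lean document; each statement's English description precedes it below -/
import Mathlib

section
/- Let G be a finite simple graph, and let k, x be nonnegative integers. If v is a vertex of G of degree at least k + √x + 1, then every set C of at most k vertices such that G − C has at most x ordered connected pairs must contain v. -/
/-!
If `v ∉ C`, then at most `k` neighbours of `v` lie in `C`, so `v` keeps `d > √x` neighbours in
`G − C`. Together with `v` they are `d + 1` pairwise connected vertices, giving at least
`d (d + 1) > x` ordered connected pairs.
-/

/-- The number of ordered connected pairs of a graph. -/
noncomputable def connPairs {V : Type*} (G : SimpleGraph V) : ℕ :=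
  {p : V × V | p.1 ≠ p.2 ∧ G.Reachable p.1 p.2}.ncard

theorem Set.ncard_offDiag {α : Type*} (s : Set α) (hs : s.Finite) :
    s.offDiag.ncard = s.ncard * s.ncard - s.ncard := by
  classical
  rw [← hs.coe_toFinset, ← Finset.coe_offDiag, Set.ncard_coe_finset, Finset.offDiag_card,
    Set.ncard_coe_finset]

namespace SimpleGraph

variable {V : Type*} [Finite V] (G : SimpleGraph V)

theorem ncard_offDiag_le_connPairs {S : Set V} (hS : ∀ a ∈ S, ∀ b ∈ S, G.Reachable a b) :
    S.offDiag.ncard ≤ connPairs G :=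
  Set.ncard_le_ncard (fun _ ⟨ha, hb, hab⟩ => ⟨hab, hS _ ha _ hb⟩) (Set.toFinite _)

theorem ncard_neighborSet_mul_succ_le_connPairs (w : V) :
    (G.neighborSet w).ncard * ((G.neighborSet w).ncard + 1) ≤ connPairs G := by
  have hreach : ∀ a ∈ insert w (G.neighborSet w), G.Reachable w a := by
    rintro a (rfl | ha)
    exacts [.refl a, Adj.reachable ha]
  have hcard : (insert w (G.neighborSet w)).ncard = (G.neighborSet w).ncard + 1 :=
    Set.ncard_insert_of_notMem G.notMem_neighborSet_self
  have := G.ncard_offDiag_le_connPairs fun a ha b hb => (hreach a ha).symm.trans (hreach b hb)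
  rw [Set.ncard_offDiag _ (Set.toFinite _), hcard] at this
  convert this using 1
  rw [Nat.mul_comm, Nat.mul_succ, Nat.add_sub_cancel]

theorem ncard_neighborSet_le_induce_compl_add {C : Set V} {v : V} (hv : v ∉ C) :
    (G.neighborSet v).ncard ≤ ((G.induce Cᶜ).neighborSet ⟨v, hv⟩).ncard + C.ncard := by
  have himage : Subtype.val '' (G.induce Cᶜ).neighborSet ⟨v, hv⟩ = G.neighborSet v ∩ Cᶜ := by
    rw [neighborSet_induce, Set.image_preimage_eq_inter_range, Subtype.range_coe]
  rw [← Set.ncard_image_of_injective _ Subtype.val_injective, himage,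
    ← Set.ncard_inter_add_ncard_sdiff_eq_ncard (G.neighborSet v) Cᶜ]
  gcongr
  · exact Set.toFinite _
  · intro u hu; simpa using hu.2

end SimpleGraph

theorem Nat.lt_mul_succ_of_sqrt_lt {x d : ℕ} (h : Real.sqrt x < d) : x < d * (d + 1) := by
  have : (x : ℝ) < d * d := by
    nlinarith [Real.sq_sqrt (Nat.cast_nonneg (α := ℝ) x), Real.sqrt_nonneg (x : ℝ)]
  have : x < d * d := by exact_mod_cast this
  nlinarith

/-- If a vertex `v` has degree at least `k + √x + 1`, then every set `C` of at
most `k` vertices such that `G − C` has at most `x` ordered connected pairs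
must contain `v`. -/
theorem stmt2 {V : Type*} [Fintype V] (G : SimpleGraph V) (k x : ℕ) (v : V)
    (hdeg : (k : ℝ) + Real.sqrt x + 1 ≤ ((G.neighborSet v).ncard : ℝ)) :
    ∀ C : Set V, C.ncard ≤ k → connPairs (G.induce Cᶜ) ≤ x → v ∈ C := by
  intro C hCk hconn
  by_contra hv
  set d := ((G.induce Cᶜ).neighborSet ⟨v, hv⟩).ncard
  have hdeg' : (G.neighborSet v).ncard ≤ d + k :=
    (G.ncard_neighborSet_le_induce_compl_add hv).trans (by omega)
  have hsqrt : Real.sqrt x < d := by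
    have : ((G.neighborSet v).ncard : ℝ) ≤ d + k := by exact_mod_cast hdeg'
    linarith
  have hpairs : d * (d + 1) ≤ connPairs (G.induce Cᶜ) :=
    (G.induce Cᶜ).ncard_neighborSet_mul_succ_le_connPairs ⟨v, hv⟩
  have := Nat.lt_mul_succ_of_sqrt_lt hsqrt
  omega
end

section
/- Let G be a finite simple graph with no isolated vertices in which every vertex has degree at most k + √x. If there exists a set C of at most k vertices such that G − C has at most x ordered connected pairs, then the number of vertices of G is at most k(k + √x) + x + k. -/
namespace SimpleGraph

variable {V : Type*} [Finite V] (G : SimpleGraph V)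

theorem ncard_support_le_connPairs : G.support.ncard ≤ connPairs G := by
  have hsub : G.support ⊆ Prod.fst '' {p : V × V | p.1 ≠ p.2 ∧ G.Reachable p.1 p.2} := by
    rintro v ⟨u, hvu⟩
    exact ⟨(v, u), ⟨hvu.ne, hvu.reachable⟩, rfl⟩
  exact (Set.ncard_le_ncard hsub).trans Set.ncard_image_le

theorem ncard_setOf_neighborSet_subset_le_mul (hiso : ∀ v, ∃ u, G.Adj v u) (C : Set V)
    {d : ℝ} (hdeg : ∀ c ∈ C, ((G.neighborSet c).ncard : ℝ) ≤ d) :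
    ({v | G.neighborSet v ⊆ C}.ncard : ℝ) ≤ C.ncard * d := by
  have hC : C.Finite := C.toFinite
  have hsub : {v | G.neighborSet v ⊆ C} ⊆ ⋃ c ∈ hC.toFinset, G.neighborSet c := by
    intro v hv
    obtain ⟨c, hvc⟩ := hiso v
    exact Set.mem_biUnion (hC.mem_toFinset.mpr (hv hvc)) hvc.symm
  calc ({v | G.neighborSet v ⊆ C}.ncard : ℝ)
      ≤ ∑ c ∈ hC.toFinset, ((G.neighborSet c).ncard : ℝ) := by
        exact_mod_cast (Set.ncard_le_ncard hsub).trans (hC.toFinset.set_ncard_biUnion_le _)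
    _ ≤ ∑ _c ∈ hC.toFinset, d := Finset.sum_le_sum fun c hc => hdeg c (hC.mem_toFinset.mp hc)
    _ = C.ncard * d := by rw [Finset.sum_const, nsmul_eq_mul, Set.ncard_eq_toFinset_card C hC]

theorem card_le_ncard_add_ncard_setOf_neighborSet_subset_add_ncard_support (C : Set V) :
    Nat.card V ≤ C.ncard + {v | G.neighborSet v ⊆ C}.ncard + (G.induce Cᶜ).support.ncard := by
  have hcompl : Cᶜ ⊆ {v | G.neighborSet v ⊆ C} ∪ (↑) '' (G.induce Cᶜ).support := by
    intro v hv
    by_cases hN : G.neighborSet v ⊆ C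
    · exact Or.inl hN
    · obtain ⟨u, hvu, hu⟩ := Set.not_subset.mp hN
      exact Or.inr ⟨⟨v, hv⟩, ⟨⟨u, hu⟩, by simpa using hvu⟩, rfl⟩
  rw [← Set.ncard_add_ncard_compl C, add_assoc,
    ← Set.ncard_image_of_injective _ Subtype.val_injective]
  exact Nat.add_le_add_left ((Set.ncard_le_ncard hcompl).trans (Set.ncard_union_le _ _)) _

end SimpleGraph

/-- If `G` has no isolated vertices, every vertex has degree at most `k + √x`,
and some set `C` of at most `k` vertices leaves at most `x` ordered connected
pairs in `G − C`, then `G` has at most `k(k + √x) + x + k` vertices. -/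
theorem stmt3 {V : Type*} [Fintype V] (G : SimpleGraph V) (k x : ℕ)
    (hiso : ∀ v : V, ∃ u : V, G.Adj v u)
    (hdeg : ∀ v : V, ((G.neighborSet v).ncard : ℝ) ≤ (k : ℝ) + Real.sqrt x)
    (hsol : ∃ C : Set V, C.ncard ≤ k ∧ connPairs (G.induce Cᶜ) ≤ x) :
    (Fintype.card V : ℝ) ≤ k * ((k : ℝ) + Real.sqrt x) + x + k := by
  obtain ⟨C, hCk, hx⟩ := hsol
  have hcard := G.card_le_ncard_add_ncard_setOf_neighborSet_subset_add_ncard_support C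
  have hA := G.ncard_setOf_neighborSet_subset_le_mul hiso C fun c _ => hdeg c
  have hB := (G.induce Cᶜ).ncard_support_le_connPairs.trans hx
  rw [Nat.card_eq_fintype_card] at hcard
  rify at hcard hB hCk
  have hCk' : (C.ncard : ℝ) * (k + Real.sqrt x) ≤ k * (k + Real.sqrt x) := by gcongr
  linarith
end

section
/- Let H be a graph and C a set of vertices achieving the maximum number of removed ordered connected pairs among all sets of size |C|. If v ∈ C is a vertex whose neighborhood in H is a clique and C∖{v} does not contain all neighbors of v, then there exists a neighbor u of v with u ∉ C such that (C∖{v})∪{u} removes at least as many ordered connected pairs as C. (Simplicial vertices can be exchanged out of optimal critical node cuts.) -/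
/-- The number of ordered connected pairs removed by deleting the vertex set `S`. -/
noncomputable def removedPairs {V : Type*} (G : SimpleGraph V) (S : Set V) : ℕ :=
  connPairs G - connPairs (G.induce Sᶜ)

/-!
Put `C' = (C ∖ {v}) ∪ {u}`. The transposition of `v` and `u` maps `H - C'` injectively into
`H - C` and preserves adjacency: a neighbour `b` of `v` in `H - C'` differs from `u`, so it is
adjacent to `u` because the neighbourhood of `v` is a clique. An injective homomorphism preserves
distinct connected pairs, hence `H - C'` has at most as many as `H - C`.
-/

open SimpleGraph Function Set

section

variable {V W : Type*}

theorem connPairs_le_of_injective {G : SimpleGraph V} {G' : SimpleGraph W} [Finite W]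
    (f : G →g G') (hf : Injective f) : connPairs G ≤ connPairs G' :=
  ncard_le_ncard_of_injOn (Prod.map f f)
    (fun _ ⟨hne, hreach⟩ => ⟨hf.ne hne, hreach.map f⟩) (hf.prodMap hf).injOn

theorem removedPairs_le_of_injective {H : SimpleGraph V} [Finite V] {S T : Set V}
    (f : H.induce Tᶜ →g H.induce Sᶜ) (hf : Injective f) :
    removedPairs H S ≤ removedPairs H T :=
  Nat.sub_le_sub_left (connPairs_le_of_injective f hf) _

namespace SimpleGraph

variable [DecidableEq V] {H : SimpleGraph V} {u v : V}

theorem adj_swap_of_isClique_neighborSet (hv : H.IsClique (H.neighborSet v)) (hu : H.Adj v u)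
    {a b : V} (hab : H.Adj a b) (ha : a ≠ u) (hb : b ≠ u) :
    H.Adj (Equiv.swap v u a) (Equiv.swap v u b) := by
  by_cases hav : a = v
  · subst hav
    rw [Equiv.swap_apply_left, Equiv.swap_apply_of_ne_of_ne hab.ne.symm hb]
    exact hv hu hab hb.symm
  by_cases hbv : b = v
  · subst hbv
    rw [Equiv.swap_apply_left, Equiv.swap_apply_of_ne_of_ne hav ha]
    exact hv hab.symm hu ha
  rwa [Equiv.swap_apply_of_ne_of_ne hav ha, Equiv.swap_apply_of_ne_of_ne hbv hb]

def induceSwap (hv : H.IsClique (H.neighborSet v)) (hu : H.Adj v u) {s t : Set V}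
    (hus : u ∉ s) (hst : MapsTo (Equiv.swap v u) s t) : H.induce s →g H.induce t where
  toFun x := ⟨Equiv.swap v u x, hst x.2⟩
  map_rel' {a b} hab :=
    adj_swap_of_isClique_neighborSet hv hu hab (ne_of_mem_of_not_mem a.2 hus)
      (ne_of_mem_of_not_mem b.2 hus)

theorem induceSwap_injective (hv : H.IsClique (H.neighborSet v)) (hu : H.Adj v u) {s t : Set V}
    (hus : u ∉ s) (hst : MapsTo (Equiv.swap v u) s t) : Injective (induceSwap hv hu hus hst) :=
  fun _ _ h => Subtype.ext ((Equiv.swap v u).injective (congrArg Subtype.val h))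

end SimpleGraph

end

theorem stmt4_general {V : Type*} [Fintype V] (H : SimpleGraph V) (C : Set V) (v : V)
    (hsimp : ∀ a ∈ H.neighborSet v, ∀ b ∈ H.neighborSet v, a ≠ b → H.Adj a b)
    (hnotall : ¬ H.neighborSet v ⊆ C \ {v}) :
    ∃ u ∈ H.neighborSet v, u ∉ C ∧
      removedPairs H C ≤ removedPairs H ((C \ {v}) ∪ {u}) := by
  classical
  obtain ⟨u, hu, huC'⟩ := not_subset.mp hnotall
  have huv : u ≠ v := hu.ne.symm
  have huC : u ∉ C := fun h => huC' ⟨h, huv⟩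
  refine ⟨u, hu, huC, ?_⟩
  have hus : u ∉ ((C \ {v}) ∪ {u})ᶜ := by simp
  have hmaps : MapsTo (Equiv.swap v u) ((C \ {v}) ∪ {u})ᶜ Cᶜ := by
    intro x hx
    simp only [mem_compl_iff, mem_union, mem_sdiff, mem_singleton_iff, not_or, not_and,
      not_not] at hx
    by_cases hxv : x = v
    · subst hxv
      simpa using huC
    · rw [Equiv.swap_apply_of_ne_of_ne hxv hx.2]
      exact fun hxC => hxv (hx.1 hxC)
  exact removedPairs_le_of_injective _ (induceSwap_injective hsimp hu hus hmaps)

/-- Simplicial vertices can be exchanged out of optimal critical node cuts: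
if `C` maximizes the number of removed ordered connected pairs among all sets of
its size, `v ∈ C` has a clique neighborhood, and `C ∖ {v}` does not contain all
neighbors of `v`, then some neighbor `u ∉ C` of `v` is such that
`(C ∖ {v}) ∪ {u}` removes at least as many ordered connected pairs as `C`. -/
theorem stmt4 {V : Type*} [Fintype V] (H : SimpleGraph V) (C : Set V) (v : V)
    (hopt : ∀ C' : Set V, C'.ncard = C.ncard → removedPairs H C' ≤ removedPairs H C)
    (hv : v ∈ C)
    (hsimp : ∀ a ∈ H.neighborSet v, ∀ b ∈ H.neighborSet v, a ≠ b → H.Adj a b)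
    (hnotall : ¬ H.neighborSet v ⊆ C \ {v}) :
    ∃ u ∈ H.neighborSet v, u ∉ C ∧
      removedPairs H C ≤ removedPairs H ((C \ {v}) ∪ {u}) :=
  stmt4_general H C v hsimp hnotall
end
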